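/- arXiv:2605.08844 — 7 statements merged into one kernel-verified Lean document; each statement's English description precedes it below -/
import Mathlib

section
/- Let d ≥ 1 and for n, m ∈ ℕ define A(n,m) by the recursion A(0,0) = 1, A(0,m) = 0 for m ≥ 1, A(n,0) = A(n-1,1) for n ≥ 1, and A(n,m) = d·A(n-1,m-1) + A(n-1,m+1) for n ≥ 1, m ≥ 1. Then for every n and every m with m ≤ n and m ≡ n (mod 2), one has A(n,m) = d^{(n+m)/2} · ( C(n, (n+m)/2) − C(n, (n+m)/2 + 1) ), where C(a,b) denotes the binomial coefficient (with C(a,b) = 0 when b > a). -/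
lemma choose_anti {n j : ℕ} (h : n ≤ 2 * j) : Nat.choose n (j + 1) ≤ Nat.choose n j := by
  rcases le_or_gt (j+1) n with hle | hlt
  · rw [← Nat.choose_symm hle, ← Nat.choose_symm (le_of_lt (Nat.lt_of_succ_le hle))]
    have : n - (j+1) + 1 = n - j := by omega
    rw [← this]
    exact Nat.choose_le_succ_of_lt_half_left (by omega)
  · rw [Nat.choose_eq_zero_of_lt hlt]; exact Nat.zero_le _

/-- closed form for the word-length counts in non-crossing partial
matchings over a `d`-letter alphabet. -/
theorem stmt0 (d : ℕ) (hd : 1 ≤ d) (A : ℕ → ℕ → ℕ)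
    (h00 : A 0 0 = 1)
    (h0m : ∀ m, 1 ≤ m → A 0 m = 0)
    (hn0 : ∀ n, 1 ≤ n → A n 0 = A (n - 1) 1)
    (hnm : ∀ n m, 1 ≤ n → 1 ≤ m → A n m = d * A (n - 1) (m - 1) + A (n - 1) (m + 1)) :
    ∀ n m, m ≤ n → m % 2 = n % 2 →
      A n m = d ^ ((n + m) / 2) *
        (Nat.choose n ((n + m) / 2) - Nat.choose n ((n + m) / 2 + 1)) := by
  have hz : ∀ n m, n < m → A n m = 0 := by
    intro n
    induction n with
    | zero => intro m hm; exact h0m m (by omega)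
    | succ n ih =>
      intro m hm
      rw [hnm (n+1) m (by omega) (by omega)]
      simp only [Nat.add_sub_cancel]
      rw [ih (m-1) (by omega), ih (m+1) (by omega)]
      simp
  intro n
  induction n with
  | zero =>
    intro m hm hp
    interval_cases m
    simpa using h00
  | succ n ih =>
    intro m hm hp
    match m with
    | 0 =>
      have hn1 : 1 ≤ n := by omega
      have hodd : n % 2 = 1 := by omega
      rw [hn0 (n+1) (by omega)]
      simp only [Nat.add_sub_cancel]
      rw [ih 1 hn1 (by omega)]
      obtain ⟨t, ht⟩ : ∃ t, n = 2*t + 1 := ⟨n/2, by omega⟩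
      subst ht
      have hk1 : (2*t+1+1)/2 = t+1 := by omega
      rw [hk1]
      congr 1
      have hsym : Nat.choose (2*t+1) t = Nat.choose (2*t+1) (t+1) := by
        have := Nat.choose_symm (n := 2*t+1) (k := t+1) (by omega)
        simpa [show 2*t+1-(t+1) = t by omega] using this
      have p1 : Nat.choose (2*t+1+1) (t+1) = Nat.choose (2*t+1) t + Nat.choose (2*t+1) (t+1) :=
        Nat.choose_succ_succ _ _
      have p2 : Nat.choose (2*t+1+1) (t+1+1) = Nat.choose (2*t+1) (t+1) + Nat.choose (2*t+1) (t+1+1) :=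
        Nat.choose_succ_succ _ _
      omega
    | m'+1 =>
      rw [hnm (n+1) (m'+1) (by omega) (by omega)]
      simp only [Nat.add_sub_cancel]
      rcases eq_or_lt_of_le hm with heq | hlt
      · -- m'+1 = n+1, i.e. m' = n
        have hmn : m' = n := by omega
        subst hmn
        rw [ih m' m'.le_refl rfl, hz m' (m'+1+1) (by omega)]
        have h1 : (m' + m')/2 = m' := by omega
        have h2 : (m'+1+(m'+1))/2 = m'+1 := by omega
        rw [h1, h2]
        simp [Nat.choose_self, Nat.choose_eq_zero_of_lt, pow_succ]
        ring
      · -- m'+1 < n+1, and parity forces m'+2 ≤ n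
        have hp2 : m' % 2 = n % 2 := by omega
        have hle2 : m' + 2 ≤ n := by omega
        rw [ih m' (by omega) hp2, ih (m'+2) hle2 (by omega)]
        obtain ⟨k, hk⟩ : ∃ k, n + m' + 2 = 2 * k := ⟨(n+m'+2)/2, by omega⟩
        have e1 : (n + m')/2 = k - 1 := by omega
        have e2 : (n + (m'+2))/2 = k := by omega
        have e3 : (n+1+(m'+1))/2 = k := by omega
        rw [e1, e2, e3, show k - 1 + 1 = k from by omega]
        have hk1 : 1 ≤ k := by omega
        have m1 : Nat.choose n k ≤ Nat.choose n (k-1) := by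
          have := choose_anti (n := n) (j := k-1) (by omega)
          simpa [show k - 1 + 1 = k by omega] using this
        have m2 : Nat.choose n (k+1) ≤ Nat.choose n k := choose_anti (by omega)
        have p1 : Nat.choose (n+1) k = Nat.choose n (k-1) + Nat.choose n k := by
          have := Nat.choose_succ_succ n (k-1)
          simpa [show k - 1 + 1 = k by omega] using this
        have p2 : Nat.choose (n+1) (k+1) = Nat.choose n k + Nat.choose n (k+1) :=
          Nat.choose_succ_succ _ _
        have hdk : d * d^(k-1) = d^k := by
          rw [← pow_succ']
          congr 1
          omega
        calc d * (d ^ (k-1) * (Nat.choose n (k-1) - Nat.choose n k)) +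
              d ^ k * (Nat.choose n k - Nat.choose n (k+1))
            = d ^ k * ((Nat.choose n (k-1) - Nat.choose n k) + (Nat.choose n k - Nat.choose n (k+1))) := by
              rw [← mul_assoc, hdk, mul_add]
          _ = d ^ k * (Nat.choose (n+1) k - Nat.choose (n+1) (k+1)) := by
              congr 1; omega
end

section
/- Let d ≥ 1 and let A(n,m) be defined by A(0,0) = 1, A(0,m) = 0 for m ≥ 1, A(n,0) = A(n-1,1), and A(n,m) = d·A(n-1,m-1) + A(n-1,m+1) for n, m ≥ 1. Then the total count Σ_{m ≥ 0} A(n,m) equals Σ_{i=0}^{⌊n/2⌋} ((n − 2i + 1)/(n + 1)) · C(n+1, i) · d^{n−i}. -/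
/-!
`A(n, m)` counts paths of length `n` from height `0` to height `m` that never go below `0`, with
up-steps of weight `d`. Only heights `m = n - 2i` occur, and there the count is the ballot number
`(n - 2i + 1)/(n + 1) · C(n+1, i) = C(n, i) - C(n, i - 1)` times `d^(n-i)`, since such a path has
`n - i` up-steps. The ballot numbers satisfy Pascal's rule, which is exactly the recursion of `A`;
at height `0` the missing term is supplied by `C(2j+1, j+1) - C(2j+1, j) = 0`.
-/

open Finset

def pathCount (d : ℕ) : ℕ → ℕ → ℕ
  | 0, 0 => 1
  | 0, _ + 1 => 0
  | n + 1, 0 => pathCount d n 1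
  | n + 1, m + 1 => d * pathCount d n m + pathCount d n (m + 2)

theorem pathCount_eq_zero_of_lt (d : ℕ) : ∀ {n m : ℕ}, n < m → pathCount d n m = 0
  | 0, _ + 1, _ => rfl
  | n + 1, m + 1, h => by
    simp only [pathCount, pathCount_eq_zero_of_lt d (n := n) (m := m) (by omega),
      pathCount_eq_zero_of_lt d (n := n) (m := m + 2) (by omega), mul_zero]

theorem pathCount_eq_zero_of_odd (d : ℕ) : ∀ {n m : ℕ}, Odd (n + m) → pathCount d n m = 0
  | 0, 0, h => absurd h (by decide)
  | 0, _ + 1, _ => rfl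
  | n + 1, 0, h =>
    pathCount_eq_zero_of_odd d (m := 1) (Nat.odd_iff.mpr (by have := Nat.odd_iff.mp h; omega))
  | n + 1, m + 1, h => by
    have hm : Odd (n + m) := Nat.odd_iff.mpr (by have := Nat.odd_iff.mp h; omega)
    have hm2 : Odd (n + (m + 2)) := Nat.odd_iff.mpr (by have := Nat.odd_iff.mp h; omega)
    simp only [pathCount, pathCount_eq_zero_of_odd d hm, pathCount_eq_zero_of_odd d hm2, mul_zero]

theorem pathCount_self (d n : ℕ) : pathCount d n n = d ^ n := by
  induction n with
  | zero => rfl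
  | succ n ih =>
    simp [pathCount, ih, pathCount_eq_zero_of_lt d (Nat.lt_add_of_pos_right two_pos), pow_succ,
      mul_comm]

theorem eq_pathCount_of_rec {d : ℕ} {A : ℕ → ℕ → ℕ} (h00 : A 0 0 = 1)
    (h0m : ∀ m, 1 ≤ m → A 0 m = 0) (hn0 : ∀ n, 1 ≤ n → A n 0 = A (n - 1) 1)
    (hnm : ∀ n m, 1 ≤ n → 1 ≤ m → A n m = d * A (n - 1) (m - 1) + A (n - 1) (m + 1)) :
    ∀ n m, A n m = pathCount d n m
  | 0, 0 => h00
  | 0, m + 1 => h0m (m + 1) m.succ_pos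
  | n + 1, 0 => by
    rw [hn0 (n + 1) n.succ_pos, Nat.add_sub_cancel, eq_pathCount_of_rec h00 h0m hn0 hnm n 1]; rfl
  | n + 1, m + 1 => by
    rw [hnm (n + 1) (m + 1) n.succ_pos m.succ_pos, Nat.add_sub_cancel, Nat.add_sub_cancel,
      eq_pathCount_of_rec h00 h0m hn0 hnm n m, eq_pathCount_of_rec h00 h0m hn0 hnm n (m + 2)]; rfl

theorem Finset.sum_range_succ_eq_sum_sub_two_mul {M : Type*} [AddCommMonoid M] (f : ℕ → M)
    (n : ℕ) (hf : ∀ m, Odd (n + m) → f m = 0) :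
    ∑ m ∈ range (n + 1), f m = ∑ i ∈ range (n / 2 + 1), f (n - 2 * i) := by
  rw [← sum_image (g := fun i => n - 2 * i)
    (by simp only [coe_range, Set.InjOn, Set.mem_Iio]; omega)]
  refine (sum_subset (by simp only [subset_iff, mem_image, mem_range]; omega) ?_).symm
  intro m hm hm_not
  refine hf m ?_
  simp only [mem_image, mem_range, not_exists, not_and] at hm hm_not
  by_contra h
  obtain ⟨k, hk⟩ := Nat.not_odd_iff_even.mp h
  exact hm_not ((n - m) / 2) (by omega) (by omega)

def ballot (n i : ℕ) : ℚ :=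
  ((n : ℚ) - 2 * i + 1) / ((n : ℚ) + 1) * (Nat.choose (n + 1) i : ℚ)

@[simp]
theorem ballot_zero_right (n : ℕ) : ballot n 0 = 1 := by
  simp [ballot, div_self (Nat.cast_add_one_ne_zero n : (n : ℚ) + 1 ≠ 0)]

theorem ballot_succ_right (n i : ℕ) : ballot n (i + 1) = n.choose (i + 1) - n.choose i := by
  have hsucc : ((n : ℚ) + 1) * n.choose i = (n + 1).choose (i + 1) * ((i : ℚ) + 1) := by
    exact_mod_cast Nat.add_one_mul_choose_eq n i
  have hpascal : ((n + 1).choose (i + 1) : ℚ) = n.choose i + n.choose (i + 1) := by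
    exact_mod_cast Nat.choose_succ_succ n i
  rw [ballot, div_mul_eq_mul_div, div_eq_iff (Nat.cast_add_one_ne_zero n)]
  push_cast
  linear_combination 2 * hsucc + ((n : ℚ) + 1) * hpascal

theorem ballot_succ_succ (n i : ℕ) : ballot (n + 1) (i + 1) = ballot n (i + 1) + ballot n i := by
  cases i with
  | zero => simp [ballot_succ_right]
  | succ i => simp only [ballot_succ_right, Nat.choose_succ_succ' n, Nat.cast_add]; ring

theorem ballot_odd_half (j : ℕ) : ballot (2 * j + 1) (j + 1) = 0 := by
  simp only [ballot, Nat.cast_add, Nat.cast_mul, Nat.cast_ofNat, Nat.cast_one]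
  ring

theorem pathCount_sub_two_mul (d : ℕ) :
    ∀ n i, 2 * i ≤ n → (pathCount d n (n - 2 * i) : ℚ) = ballot n i * d ^ (n - i)
  | 0, 0, _ => by simp [pathCount]
  | n + 1, 0, _ => by simp [pathCount_self]
  | n + 1, j + 1, hj => by
    have hstep : (pathCount d (n + 1) (n + 1 - 2 * (j + 1)) : ℚ)
        = d * (ballot n (j + 1) * d ^ (n - (j + 1))) + ballot n j * d ^ (n - j) := by
      rcases Nat.lt_or_ge n (2 * (j + 1)) with hn | hn
      · obtain rfl : n = 2 * j + 1 := by omega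
        rw [ballot_odd_half, zero_mul, mul_zero, zero_add,
          ← pathCount_sub_two_mul d (2 * j + 1) j (by omega),
          show 2 * j + 1 + 1 - 2 * (j + 1) = 0 by omega, show 2 * j + 1 - 2 * j = 1 by omega]
        rfl
      · rw [← pathCount_sub_two_mul d n (j + 1) hn, ← pathCount_sub_two_mul d n j (by omega),
          show n + 1 - 2 * (j + 1) = n - 2 * (j + 1) + 1 by omega, pathCount,
          show n - 2 * (j + 1) + 2 = n - 2 * j by omega]
        push_cast
        ring
    rw [hstep, ballot_succ_succ, Nat.add_sub_add_right, show n - j = n - (j + 1) + 1 by omega]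
    ring

theorem stmt2_general (d : ℕ) (A : ℕ → ℕ → ℕ)
    (h00 : A 0 0 = 1)
    (h0m : ∀ m, 1 ≤ m → A 0 m = 0)
    (hn0 : ∀ n, 1 ≤ n → A n 0 = A (n - 1) 1)
    (hnm : ∀ n m, 1 ≤ n → 1 ≤ m → A n m = d * A (n - 1) (m - 1) + A (n - 1) (m + 1))
    (n : ℕ) :
    (∀ m, n < m → A n m = 0) ∧
    ((∑ m ∈ Finset.range (n + 1), A n m : ℕ) : ℚ) =
      ∑ i ∈ Finset.range (n / 2 + 1),
        (((n : ℚ) - 2 * i + 1) / ((n : ℚ) + 1)) * (Nat.choose (n + 1) i : ℚ)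
          * (d : ℚ) ^ (n - i) := by
  have hA := eq_pathCount_of_rec h00 h0m hn0 hnm n
  refine ⟨fun m hm => hA m ▸ pathCount_eq_zero_of_lt d hm, ?_⟩
  simp only [hA, Nat.cast_sum]
  rw [sum_range_succ_eq_sum_sub_two_mul _ n fun m hm => by
    rw [pathCount_eq_zero_of_odd d hm, Nat.cast_zero]]
  exact sum_congr rfl fun i hi => pathCount_sub_two_mul d n i (by have := mem_range.mp hi; omega)

/-- the total count `Σ_{m ≥ 0} A(n,m)` equals the ballot-number sum
`Σ_{i=0}^{⌊n/2⌋} ((n - 2i + 1)/(n + 1)) C(n+1,i) d^{n-i}`. -/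
theorem stmt2 (d : ℕ) (hd : 1 ≤ d) (A : ℕ → ℕ → ℕ)
    (h00 : A 0 0 = 1)
    (h0m : ∀ m, 1 ≤ m → A 0 m = 0)
    (hn0 : ∀ n, 1 ≤ n → A n 0 = A (n - 1) 1)
    (hnm : ∀ n m, 1 ≤ n → 1 ≤ m → A n m = d * A (n - 1) (m - 1) + A (n - 1) (m + 1))
    (n : ℕ) :
    (∀ m, n < m → A n m = 0) ∧
    ((∑ m ∈ Finset.range (n + 1), A n m : ℕ) : ℚ) =
      ∑ i ∈ Finset.range (n / 2 + 1),
        (((n : ℚ) - 2 * i + 1) / ((n : ℚ) + 1)) * (Nat.choose (n + 1) i : ℚ)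
          * (d : ℚ) ^ (n - i) :=
  stmt2_general d A h00 h0m hn0 hnm n
end

section
/- Let d ≥ 1, n ≥ 0, and ℓ ≥ n, and set t = ℓ − n. Define B(ℓ, m) for m ≥ 0 by B(n, n) = d^n, B(n, m) = 0 for m ≠ n, and for ℓ > n: B(ℓ, 0) = B(ℓ−1, 1) and B(ℓ, m) = d·B(ℓ−1, m−1) + B(ℓ−1, m+1) for m ≥ 1. Then Σ_{m ≥ 0} B(ℓ, m) = d^n · Σ_{i=0}^{⌊(t+n)/2⌋} ( C(t, i) − C(t, i − n − 1) ) · d^{t−i}. -/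
/-!
Unfolding the recursion, `B (n + t) m` is `d ^ n` times the weighted number of walks of `t` steps
`±1` from height `n` to height `m` that never go below `0`, an up-step having weight `d`. A walk
with `u` up-steps ends at height `n + 2u - t`, and by the reflection principle there are
`C(t, u) - C(t, u + n + 1)` of them. This closed form satisfies the recursion: off the floor it is
Pascal's rule, and at the floor `m = 0` the two extra terms cancel by the symmetry of binomial
coefficients. Summing over the final heights `m = n + t - 2i` gives the formula.
-/

open Finset

/-- Reflection-principle count of the walks of `t` steps with `u` up-steps from height `n` that
never go below `0`. -/
def nonnegWalkCount (n t u : ℕ) : ℤ := (t.choose u : ℤ) - (t.choose (u + n + 1) : ℤ)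

lemma nonnegWalkCount_eq_zero_of_lt {n t u : ℕ} (h : t < u) : nonnegWalkCount n t u = 0 := by
  simp [nonnegWalkCount, Nat.choose_eq_zero_of_lt h,
    Nat.choose_eq_zero_of_lt (by omega : t < u + n + 1)]

lemma nonnegWalkCount_zero_right {n t : ℕ} (h : t ≤ n) : nonnegWalkCount n t 0 = 1 := by
  simp [nonnegWalkCount, Nat.choose_eq_zero_of_lt (by omega : t < n + 1)]

lemma nonnegWalkCount_succ_succ (n t u : ℕ) :
    nonnegWalkCount n (t + 1) (u + 1) = nonnegWalkCount n t u + nonnegWalkCount n t (u + 1) := by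
  simp only [nonnegWalkCount, show u + 1 + n + 1 = (u + n + 1) + 1 by ring, Nat.choose_succ_succ]
  push_cast
  ring

lemma nonnegWalkCount_succ_of_floor {n t u : ℕ} (h : n + 2 * u = t + 1) :
    nonnegWalkCount n (t + 1) u = nonnegWalkCount n t u := by
  rcases u with _ | v
  · rw [nonnegWalkCount_zero_right (by omega), nonnegWalkCount_zero_right (by omega)]
  · have hv : nonnegWalkCount n t v = 0 := by
      rw [nonnegWalkCount, Nat.choose_symm_of_eq_add (by omega : t = v + (v + n + 1)), sub_self]
    rw [nonnegWalkCount_succ_succ, hv, zero_add]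

/-- The closed form of `B (n + t) m`: walks with `u` up-steps end at height `m` exactly when
`m + t - n = 2u`. -/
def walkWeight (d n t m : ℕ) : ℤ :=
  if (m + t + n) % 2 = 0 ∧ n ≤ m + t then
    (d : ℤ) ^ n * (d : ℤ) ^ ((m + t - n) / 2) * nonnegWalkCount n t ((m + t - n) / 2)
  else 0

section walkWeight

variable (d n : ℕ)

lemma walkWeight_zero_left (m : ℕ) : walkWeight d n 0 m = if m = n then (d : ℤ) ^ n else 0 := by
  unfold walkWeight
  by_cases hmn : m = n
  · subst hmn
    simp [nonnegWalkCount_zero_right, ← two_mul]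
  · rw [if_neg hmn]
    split_ifs
    · rw [nonnegWalkCount_eq_zero_of_lt (by omega), mul_zero]
    · rfl

lemma walkWeight_succ_zero (t : ℕ) : walkWeight d n (t + 1) 0 = walkWeight d n t 1 := by
  unfold walkWeight
  rw [show 0 + (t + 1) = 1 + t by ring]
  split_ifs with hc
  · rw [nonnegWalkCount_succ_of_floor (by omega)]
  · rfl

lemma walkWeight_succ_succ (t k : ℕ) :
    walkWeight d n (t + 1) (k + 1) = d * walkWeight d n t k + walkWeight d n t (k + 2) := by
  unfold walkWeight
  by_cases hp : (k + t + n) % 2 = 0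
  · by_cases hA : n ≤ k + t
    · rw [if_pos (by omega), if_pos (by omega), if_pos (by omega),
        show (k + 1 + (t + 1) - n) / 2 = (k + t - n) / 2 + 1 by omega,
        show (k + 2 + t - n) / 2 = (k + t - n) / 2 + 1 by omega, nonnegWalkCount_succ_succ]
      ring
    · by_cases hL : n ≤ k + t + 2
      · rw [if_pos (by omega), if_neg (by omega), if_pos (by omega),
          show (k + 1 + (t + 1) - n) / 2 = 0 by omega, show (k + 2 + t - n) / 2 = 0 by omega,
          nonnegWalkCount_zero_right (by omega), nonnegWalkCount_zero_right (by omega)]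
        ring
      · rw [if_neg (by omega), if_neg (by omega), if_neg (by omega)]
        ring
  · rw [if_neg (by omega), if_neg (by omega), if_neg (by omega)]
    ring

lemma walkWeight_eq_zero_of_lt {t m : ℕ} (h : n + t < m) : walkWeight d n t m = 0 := by
  unfold walkWeight
  split_ifs
  · rw [nonnegWalkCount_eq_zero_of_lt (by omega), mul_zero]
  · rfl

lemma walkWeight_eq_zero_of_odd {t m : ℕ} (h : (m + (n + t)) % 2 = 1) :
    walkWeight d n t m = 0 :=
  if_neg (by omega)

lemma walkWeight_sub_two_mul {t i : ℕ} (h : 2 * i ≤ n + t) :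
    walkWeight d n t (n + t - 2 * i) =
      (d : ℤ) ^ n * (((t.choose i : ℤ) -
        (if n + 1 ≤ i then (t.choose (i - (n + 1)) : ℤ) else 0)) * (d : ℤ) ^ (t - i)) := by
  unfold walkWeight nonnegWalkCount
  by_cases hi : i ≤ t
  · rw [if_pos (by omega), show (n + t - 2 * i + t - n) / 2 = t - i by omega, Nat.choose_symm hi]
    by_cases hni : n + 1 ≤ i
    · rw [if_pos hni, Nat.choose_symm_of_eq_add (by omega : t = t - i + n + 1 + (i - (n + 1)))]
      ring
    · rw [if_neg hni, Nat.choose_eq_zero_of_lt (by omega : t < t - i + n + 1)]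
      push_cast
      ring
  · rw [if_neg (by omega), if_neg (by omega : ¬(n + 1 ≤ i)),
      Nat.choose_eq_zero_of_lt (by omega : t < i)]
    push_cast
    ring

end walkWeight

lemma sum_range_eq_sum_range_sub_two_mul {M : Type*} [AddCommMonoid M] (f : ℕ → M) (N : ℕ)
    (hf : ∀ m ≤ N, (m + N) % 2 = 1 → f m = 0) :
    ∑ m ∈ range (N + 1), f m = ∑ i ∈ range (N / 2 + 1), f (N - 2 * i) := by
  have hinj : Set.InjOn (fun i => N - 2 * i) (range (N / 2 + 1)) := by
    intro x hx y hy hxy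
    simp only [coe_range, Set.mem_Iio] at hx hy
    simp only at hxy
    omega
  rw [← sum_image hinj]
  refine (sum_subset (fun m hm => ?_) fun m hm hnot => hf m ?_ ?_).symm
  · obtain ⟨i, -, rfl⟩ := mem_image.mp hm
    exact mem_range.mpr (by omega)
  · exact Nat.lt_succ_iff.mp (mem_range.mp hm)
  · simp only [mem_image, mem_range, not_exists, not_and] at hm hnot
    have := hnot ((N - m) / 2) (by omega)
    omega

theorem eq_walkWeight_of_recursion (d n : ℕ) (B : ℕ → ℕ → ℕ)
    (hBnn : B n n = d ^ n)
    (hBn : ∀ m, m ≠ n → B n m = 0)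
    (hB0 : ∀ l, n < l → B l 0 = B (l - 1) 1)
    (hBm : ∀ l m, n < l → 1 ≤ m → B l m = d * B (l - 1) (m - 1) + B (l - 1) (m + 1))
    (t m : ℕ) : (B (n + t) m : ℤ) = walkWeight d n t m := by
  induction t generalizing m with
  | zero =>
    rw [walkWeight_zero_left, add_zero]
    split_ifs with hmn
    · rw [hmn, hBnn]
      push_cast
      rfl
    · rw [hBn m hmn, Nat.cast_zero]
  | succ t ih =>
    rcases m with _ | m
    · rw [hB0 _ (by omega), ← add_assoc, Nat.add_sub_cancel, ih, walkWeight_succ_zero]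
    · rw [hBm _ _ (by omega) (by omega), ← add_assoc, Nat.add_sub_cancel, Nat.add_sub_cancel]
      push_cast
      rw [ih, ih, walkWeight_succ_succ]

theorem stmt5_general (d n : ℕ) (B : ℕ → ℕ → ℕ)
    (hBnn : B n n = d ^ n)
    (hBn : ∀ m, m ≠ n → B n m = 0)
    (hB0 : ∀ l, n < l → B l 0 = B (l - 1) 1)
    (hBm : ∀ l m, n < l → 1 ≤ m → B l m = d * B (l - 1) (m - 1) + B (l - 1) (m + 1))
    (l : ℕ) (hl : n ≤ l) :
    (∀ m, l < m → B l m = 0) ∧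
    (∑ m ∈ Finset.range (l + 1), (B l m : ℤ)) =
      (d : ℤ) ^ n * ∑ i ∈ Finset.range (((l - n) + n) / 2 + 1),
        ((Nat.choose (l - n) i : ℤ) -
            (if n + 1 ≤ i then (Nat.choose (l - n) (i - (n + 1)) : ℤ) else 0))
          * (d : ℤ) ^ (l - n - i) := by
  obtain ⟨t, rfl⟩ : ∃ t, l = n + t := ⟨l - n, by omega⟩
  have hB := eq_walkWeight_of_recursion d n B hBnn hBn hB0 hBm t
  refine ⟨fun m hm => by exact_mod_cast (hB m).trans (walkWeight_eq_zero_of_lt d n hm), ?_⟩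
  rw [Nat.add_sub_cancel_left, add_comm t n, mul_sum]
  simp only [hB]
  rw [sum_range_eq_sum_range_sub_two_mul _ _ fun m _ => walkWeight_eq_zero_of_odd d n]
  exact sum_congr rfl fun i hi => walkWeight_sub_two_mul d n (by have := mem_range.mp hi; omega)

/-- cardinality of `NC(ℓ)_n` (non-crossing partial matchings of `ℓ`
points over a `d`-letter alphabet with no pair among the first `n` points). -/
theorem stmt5 (d n : ℕ) (hd : 1 ≤ d) (B : ℕ → ℕ → ℕ)
    (hBnn : B n n = d ^ n)
    (hBn : ∀ m, m ≠ n → B n m = 0)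
    (hB0 : ∀ l, n < l → B l 0 = B (l - 1) 1)
    (hBm : ∀ l m, n < l → 1 ≤ m → B l m = d * B (l - 1) (m - 1) + B (l - 1) (m + 1))
    (l : ℕ) (hl : n ≤ l) :
    (∀ m, l < m → B l m = 0) ∧
    (∑ m ∈ Finset.range (l + 1), (B l m : ℤ)) =
      (d : ℤ) ^ n * ∑ i ∈ Finset.range (((l - n) + n) / 2 + 1),
        ((Nat.choose (l - n) i : ℤ) -
            (if n + 1 ≤ i then (Nat.choose (l - n) (i - (n + 1)) : ℤ) else 0))
          * (d : ℤ) ^ (l - n - i) :=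
  stmt5_general d n B hBnn hBn hB0 hBm l hl
end

section
/- Let φ be defined on words over {1,…,d} as the number of non-crossing perfect matchings compatible with the letters (φ(I) = # of non-crossing perfect matchings π of the positions of I with equal letters on each pair). Then φ is tracial: φ(I·J) = φ(J·I) for all words I, J. -/
/-- A non-crossing perfect matching of the positions of the word `w`, compatible
with the letters of `w`. -/
def IsNCPerfectMatching (w : List ℕ) (M : Finset (ℕ × ℕ)) : Prop :=
  (∀ pq ∈ M, pq.1 < pq.2 ∧ pq.2 < w.length ∧ w[pq.1]? = w[pq.2]?) ∧
  (∀ i, i < w.length → ∃! pq, pq ∈ M ∧ (pq.1 = i ∨ pq.2 = i)) ∧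
  (∀ pq ∈ M, ∀ rs ∈ M, ¬(pq.1 < rs.1 ∧ rs.1 < pq.2 ∧ pq.2 < rs.2))

/-- `ncφ w` is the number of non-crossing perfect matchings compatible with `w`. -/
noncomputable def ncφ (w : List ℕ) : ℕ :=
  Nat.card {M : Finset (ℕ × ℕ) // IsNCPerfectMatching w M}

/-!
Rotating `a :: w` to `w ++ [a]` moves position `i` to `i - 1` and position `0` to the end.
Applied to both ends of every pair, this sends a compatible matching of `a :: w` to one of
`w ++ [a]`: letters travel with their positions, and two pairs cross after the rotation
only if they crossed before, because crossing is a property of chords of a circle, which the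
rotation merely relabels. The map is injective, so `ncφ u ≤ ncφ (u.rotate k)` for every `k`,
and rotating `I ++ J` by `I.length` and `J ++ I` by `J.length` gives both inequalities.
-/

namespace IsNCPerfectMatching

def rotatePos (n i : ℕ) : ℕ := if i = 0 then n else i - 1

def rotatePair (n : ℕ) (pq : ℕ × ℕ) : ℕ × ℕ :=
  if pq.1 = 0 then (rotatePos n pq.2, rotatePos n pq.1)
  else (rotatePos n pq.1, rotatePos n pq.2)

lemma getElem?_rotatePos (a : ℕ) (w : List ℕ) {i : ℕ} (hi : i < w.length + 1) :
    (w ++ [a])[rotatePos w.length i]? = (a :: w)[i]? := by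
  unfold rotatePos
  split_ifs with h
  · simp [h]
  · obtain ⟨k, rfl⟩ := Nat.exists_eq_succ_of_ne_zero h
    rw [List.getElem?_append_left (by omega)]
    simp

lemma exists_rotatePos_eq {n j : ℕ} (hj : j < n + 1) : ∃ i < n + 1, rotatePos n i = j := by
  by_cases h : j = n
  · exact ⟨0, by omega, by simp [rotatePos, h]⟩
  · exact ⟨j + 1, by omega, by simp [rotatePos]⟩

variable {n : ℕ} {pq rs : ℕ × ℕ}

lemma rotatePair_lt (hpq : pq.1 < pq.2) (hq : pq.2 < n + 1) :
    (rotatePair n pq).1 < (rotatePair n pq).2 ∧ (rotatePair n pq).2 < n + 1 := by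
  unfold rotatePair rotatePos
  split_ifs <;> omega

lemma rotatePair_covers_iff (hpq : pq.1 < pq.2) (hq : pq.2 < n + 1) {i : ℕ} (hi : i < n + 1) :
    ((rotatePair n pq).1 = rotatePos n i ∨ (rotatePair n pq).2 = rotatePos n i) ↔
      (pq.1 = i ∨ pq.2 = i) := by
  unfold rotatePair rotatePos
  split_ifs <;> omega

lemma rotatePair_injOn : Set.InjOn (rotatePair n) {pq | pq.1 < pq.2 ∧ pq.2 < n + 1} := by
  rintro pq ⟨hpq, hq⟩ rs ⟨hrs, hs⟩ h
  unfold rotatePair rotatePos at h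
  ext <;> split_ifs at h <;> simp only [Prod.mk.injEq] at h <;> omega

lemma rotatePair_crossing (hpq : pq.1 < pq.2) (hrs : rs.1 < rs.2) (hs : rs.2 < n + 1)
    (h : (rotatePair n pq).1 < (rotatePair n rs).1 ∧ (rotatePair n rs).1 < (rotatePair n pq).2 ∧
      (rotatePair n pq).2 < (rotatePair n rs).2) :
    (pq.1 < rs.1 ∧ rs.1 < pq.2 ∧ pq.2 < rs.2) ∨
      (rs.1 < pq.1 ∧ pq.1 < rs.2 ∧ rs.2 < pq.2) := by
  unfold rotatePair rotatePos at h
  split_ifs at h <;> omega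

lemma coe_subset {w : List ℕ} {M : Finset (ℕ × ℕ)} (hM : IsNCPerfectMatching w M) :
    (M : Set (ℕ × ℕ)) ⊆ {pq | pq.1 < pq.2 ∧ pq.2 < w.length} :=
  fun pq hpq => ⟨(hM.1 pq hpq).1, (hM.1 pq hpq).2.1⟩

lemma getElem?_rotatePair (a : ℕ) (w : List ℕ) {pq : ℕ × ℕ} (hpq : pq.1 < pq.2)
    (hq : pq.2 < w.length + 1) (h : (a :: w)[pq.1]? = (a :: w)[pq.2]?) :
    (w ++ [a])[(rotatePair w.length pq).1]? = (w ++ [a])[(rotatePair w.length pq).2]? := by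
  unfold rotatePair
  split_ifs <;> rw [getElem?_rotatePos a w (by omega), getElem?_rotatePos a w (by omega), h]

lemma image_rotatePair {a : ℕ} {w : List ℕ} {M : Finset (ℕ × ℕ)}
    (hM : IsNCPerfectMatching (a :: w) M) :
    IsNCPerfectMatching (w ++ [a]) (M.image (rotatePair w.length)) := by
  have hbound : ∀ pq ∈ M, pq.1 < pq.2 ∧ pq.2 < w.length + 1 :=
    fun _ hpq => hM.coe_subset hpq
  obtain ⟨hpairs, hcover, hnc⟩ := hM
  have hlen : (w ++ [a]).length = w.length + 1 := by simp
  refine ⟨?_, fun j hj => ?_, ?_⟩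
  · intro _ hpq'
    obtain ⟨pq, hpq, rfl⟩ := Finset.mem_image.1 hpq'
    rw [hlen]
    obtain ⟨hlt, hq⟩ := hbound pq hpq
    exact ⟨(rotatePair_lt hlt hq).1, (rotatePair_lt hlt hq).2,
      getElem?_rotatePair a w hlt hq (hpairs pq hpq).2.2⟩
  · obtain ⟨i, hi, rfl⟩ := exists_rotatePos_eq (hlen ▸ hj)
    obtain ⟨pq, ⟨hpq, hcov⟩, huniq⟩ := hcover i (by simpa using hi)
    obtain ⟨hlt, hq⟩ := hbound pq hpq
    refine ⟨rotatePair w.length pq,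
      ⟨Finset.mem_image_of_mem _ hpq, (rotatePair_covers_iff hlt hq hi).2 hcov⟩, ?_⟩
    rintro _ ⟨hrs', hcov'⟩
    obtain ⟨rs, hrs, rfl⟩ := Finset.mem_image.1 hrs'
    obtain ⟨hlt', hs⟩ := hbound rs hrs
    rw [huniq rs ⟨hrs, (rotatePair_covers_iff hlt' hs hi).1 hcov'⟩]
  · intro _ hpq' _ hrs' hcross
    obtain ⟨pq, hpq, rfl⟩ := Finset.mem_image.1 hpq'
    obtain ⟨rs, hrs, rfl⟩ := Finset.mem_image.1 hrs'
    obtain ⟨hlt, -⟩ := hbound pq hpq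
    obtain ⟨hlt', hs⟩ := hbound rs hrs
    rcases rotatePair_crossing hlt hlt' hs hcross with h | h
    · exact hnc pq hpq rs hrs h
    · exact hnc rs hrs pq hpq h

end IsNCPerfectMatching

instance (w : List ℕ) : Finite {M : Finset (ℕ × ℕ) // IsNCPerfectMatching w M} :=
  Set.Finite.to_subtype <|
    (Finset.range w.length ×ˢ Finset.range w.length).powerset.finite_toSet.subset
      fun _ hM => Finset.mem_powerset.2 fun pq hpq => by
        have := hM.1 pq hpq
        simp only [Finset.mem_product, Finset.mem_range]
        omega

lemma ncφ_le_ncφ_rotate_one (u : List ℕ) : ncφ u ≤ ncφ (u.rotate 1) := by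
  cases u with
  | nil => rfl
  | cons a w =>
    rw [List.rotate_cons_succ, List.rotate_zero]
    refine Nat.card_le_card_of_injective
      (fun M => ⟨M.1.image (IsNCPerfectMatching.rotatePair w.length), M.2.image_rotatePair⟩) ?_
    rintro ⟨M, hM⟩ ⟨N, hN⟩ h
    have himage : M.image (IsNCPerfectMatching.rotatePair w.length) =
        N.image (IsNCPerfectMatching.rotatePair w.length) := congrArg Subtype.val h
    rw [← Finset.coe_inj, Finset.coe_image, Finset.coe_image,
      IsNCPerfectMatching.rotatePair_injOn.image_eq_image_iff hM.coe_subset hN.coe_subset,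
      Finset.coe_inj] at himage
    exact Subtype.ext himage

lemma ncφ_le_ncφ_rotate (u : List ℕ) (k : ℕ) : ncφ u ≤ ncφ (u.rotate k) := by
  induction k with
  | zero => rw [List.rotate_zero]
  | succ k ih => exact ih.trans ((ncφ_le_ncφ_rotate_one _).trans_eq (by rw [List.rotate_rotate]))

/-- `φ` is tracial: `φ(I·J) = φ(J·I)`. -/
theorem stmt11 (I J : List ℕ) : ncφ (I ++ J) = ncφ (J ++ I) := by
  apply le_antisymm
  · simpa [List.rotate_append_length_eq] using ncφ_le_ncφ_rotate (I ++ J) I.length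
  · simpa [List.rotate_append_length_eq] using ncφ_le_ncφ_rotate (J ++ I) J.length
end

section
/- Let X : [0,T] → ℝ^d be continuously differentiable and suppose K : {(s,t) : 0 ≤ s ≤ t ≤ T} → ℝ is a continuous solution of the quadratic integral equation K(s,t) = 1 − Σ_{ι=1}^d ∫_s^t ∫_s^r K(s,u) K(u,r) X′^{(ι)}(u) X′^{(ι)}(r) du dr for all 0 ≤ s ≤ t ≤ T. Then K is the unique continuous solution of this equation (any two continuous solutions coincide). -/
/-!
Both solutions are bounded on the compact triangle `0 ≤ s ≤ t ≤ T`, so subtracting the two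
equations and using `ab - a'b' = (a - a')b + a'(b - b')` bounds `|K - K'|` at `(s, t)` by
`A ∫₀ᵗ F`, where `F r` is the supremum of `|K - K'|` over the triangle `0 ≤ s ≤ u ≤ r`.
Hence `F t ≤ A ∫₀ᵗ F`, and iterating gives `F ≤ F(T) (At)ⁿ / n! → 0`. Tietze's theorem first
extends the two solutions from the triangle to continuous functions on the plane, so that all
integrands are continuous in both variables.
-/

open MeasureTheory Set Filter Function

universe u v

theorem mul_integral_pow_div_factorial (c a t : ℝ) (n : ℕ) :
    c * ∫ r in a..t, (c * (r - a)) ^ n / n.factorial =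
      (c * (t - a)) ^ (n + 1) / (n + 1).factorial := by
  rw [intervalIntegral.integral_comp_sub_right (fun x => (c * x) ^ n / n.factorial)]
  simp only [mul_pow, sub_self, intervalIntegral.integral_div,
    intervalIntegral.integral_const_mul, integral_pow]
  push_cast [Nat.factorial_succ]
  field_simp
  ring

theorem eqOn_zero_of_le_mul_integral {F : ℝ → ℝ} {a b A : ℝ} (hA : 0 ≤ A)
    (hFi : IntervalIntegrable F volume a b) (hF0 : ∀ t ∈ Icc a b, 0 ≤ F t)
    (hF : ∀ t ∈ Icc a b, F t ≤ A * ∫ r in a..t, F r) : EqOn F 0 (Icc a b) := by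
  set B := A * ∫ r in a..b, F r
  have hpow (n : ℕ) : ∀ t ∈ Icc a b, F t ≤ B * ((A * (t - a)) ^ n / n.factorial) := by
    induction n with
    | zero =>
      intro t ht
      have : ∫ r in a..t, F r ≤ ∫ r in a..b, F r :=
        intervalIntegral.integral_mono_interval le_rfl ht.1 ht.2
          ((ae_restrict_iff' measurableSet_Ioc).2
            (.of_forall fun r hr => hF0 r (Ioc_subset_Icc_self hr))) hFi
      simpa using (hF t ht).trans (mul_le_mul_of_nonneg_left this hA)
    | succ n ih =>
      intro t ht
      have hat : IntervalIntegrable F volume a t :=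
        hFi.mono_set (uIcc_subset_uIcc left_mem_uIcc (mem_uIcc_of_le ht.1 ht.2))
      calc F t ≤ A * ∫ r in a..t, F r := hF t ht
        _ ≤ A * ∫ r in a..t, B * ((A * (r - a)) ^ n / n.factorial) := by
          gcongr
          exact intervalIntegral.integral_mono_on ht.1 hat
            (Continuous.intervalIntegrable (by fun_prop) _ _)
            fun r hr => ih r ⟨hr.1, hr.2.trans ht.2⟩
        _ = B * ((A * (t - a)) ^ (n + 1) / (n + 1).factorial) := by
          rw [intervalIntegral.integral_const_mul, mul_left_comm, mul_integral_pow_div_factorial]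
  intro t ht
  have hlim : Tendsto (fun n : ℕ => B * ((A * (t - a)) ^ n / n.factorial)) atTop (nhds 0) := by
    simpa using (FloorSemiring.tendsto_pow_div_factorial_atTop (A * (t - a))).const_mul B
  exact le_antisymm (ge_of_tendsto' hlim fun n => hpow n t ht) (hF0 t ht)

def triangle (T : ℝ) : Set (ℝ × ℝ) := {p | 0 ≤ p.1 ∧ p.1 ≤ p.2 ∧ p.2 ≤ T}

theorem isClosed_triangle (T : ℝ) : IsClosed (triangle T) :=
  (isClosed_le continuous_const continuous_fst).inter <|
    (isClosed_le continuous_fst continuous_snd).inter (isClosed_le continuous_snd continuous_const)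

theorem isCompact_triangle (T : ℝ) : IsCompact (triangle T) :=
  (isCompact_Icc (a := ((0 : ℝ), (0 : ℝ))) (b := (T, T))).of_isClosed_subset
    (isClosed_triangle T) fun _ ⟨h0, h1, h2⟩ => ⟨⟨h0, h0.trans h1⟩, h1.trans h2, h2⟩

noncomputable def triangleSup (D : ℝ → ℝ → ℝ) (t : ℝ) : ℝ :=
  sSup ((fun p : ℝ × ℝ => |D p.1 p.2|) '' triangle t)

section triangleSup

variable {D : ℝ → ℝ → ℝ}

theorem triangleSup_nonneg (t : ℝ) : 0 ≤ triangleSup D t :=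
  Real.sSup_nonneg <| forall_mem_image.2 fun _ _ => abs_nonneg _

theorem triangleSup_le {t c : ℝ} (hc : 0 ≤ c) (h : ∀ p ∈ triangle t, |D p.1 p.2| ≤ c) :
    triangleSup D t ≤ c :=
  Real.sSup_le (forall_mem_image.2 h) hc

theorem abs_le_triangleSup (hD : Continuous (uncurry D)) {t : ℝ} {p : ℝ × ℝ}
    (hp : p ∈ triangle t) : |D p.1 p.2| ≤ triangleSup D t :=
  le_csSup ((isCompact_triangle t).image (by fun_prop)).bddAbove (mem_image_of_mem _ hp)

theorem monotone_triangleSup (hD : Continuous (uncurry D)) : Monotone (triangleSup D) :=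
  fun _ _ hst => triangleSup_le (triangleSup_nonneg _) fun _ hp =>
    abs_le_triangleSup hD ⟨hp.1, hp.2.1, hp.2.2.trans hst⟩

end triangleSup

theorem exists_continuous_eqOn_of_isClosed {X : Type u} {Y : Type v} [TopologicalSpace X]
    [NormalSpace X] [TopologicalSpace Y] [TietzeExtension.{u, v} Y] {s : Set X} {f : X → Y}
    (hs : IsClosed s) (hf : ContinuousOn f s) : ∃ g : X → Y, Continuous g ∧ EqOn g f s := by
  obtain ⟨g, hg⟩ := ContinuousMap.exists_restrict_eq hs ⟨s.domRestrict f, hf.domRestrict⟩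
  exact ⟨g, g.continuous, fun x hx => congr($hg ⟨x, hx⟩)⟩

theorem abs_mul_sub_mul_le (a b a' b' : ℝ) :
    |a * b - a' * b'| ≤ |a - a'| * |b| + |a'| * |b - b'| := by
  calc |a * b - a' * b'| = |(a - a') * b + a' * (b - b')| := by ring_nf
    _ ≤ |a - a'| * |b| + |a'| * |b - b'| := by
      simpa only [abs_mul] using abs_add_le ((a - a') * b) (a' * (b - b'))

theorem integral_triangle_sub {G G' : ℝ → ℝ → ℝ} (hG : Continuous (uncurry G))
    (hG' : Continuous (uncurry G')) (s t : ℝ) :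
    (∫ r in s..t, ∫ u in s..r, G u r) - ∫ r in s..t, ∫ u in s..r, G' u r =
      ∫ r in s..t, ∫ u in s..r, (G u r - G' u r) := by
  rw [← intervalIntegral.integral_sub (Continuous.intervalIntegrable (by fun_prop) _ _)
    (Continuous.intervalIntegrable (by fun_prop) _ _)]
  refine intervalIntegral.integral_congr fun r _ => ?_
  exact (intervalIntegral.integral_sub (Continuous.intervalIntegrable (by fun_prop) _ _)
    (Continuous.intervalIntegrable (by fun_prop) _ _)).symm

theorem abs_integral_triangle_le {G : ℝ → ℝ → ℝ} {g : ℝ → ℝ} {s t : ℝ} (hst : s ≤ t)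
    (hg : IntervalIntegrable g volume s t) (hG : ∀ r ∈ Icc s t, ∀ u ∈ Icc s r, |G u r| ≤ g r) :
    |∫ r in s..t, ∫ u in s..r, G u r| ≤ (t - s) * ∫ r in s..t, g r := by
  rw [← intervalIntegral.integral_const_mul]
  refine intervalIntegral.norm_integral_le_of_norm_le (f := fun r => ∫ u in s..r, G u r) hst
    (.of_forall fun r hr => ?_) (hg.const_mul _)
  have hr : r ∈ Icc s t := Ioc_subset_Icc_self hr
  have hg0 : 0 ≤ g r := (abs_nonneg _).trans (hG r hr s ⟨le_rfl, hr.1⟩)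
  calc ‖∫ u in s..r, G u r‖ ≤ g r * |r - s| :=
        intervalIntegral.norm_integral_le_of_norm_le_const fun u hu =>
          hG r hr u (Ioc_subset_Icc_self (by rwa [← uIoc_of_le hr.1]))
    _ ≤ (t - s) * g r := by
        rw [abs_of_nonneg (sub_nonneg.2 hr.1), mul_comm]
        gcongr
        exact hr.2

def IsSchwingerDysonKernel {d : ℕ} (T : ℝ) (X' : Fin d → ℝ → ℝ) (K : ℝ → ℝ → ℝ) : Prop :=
  ∀ s t, 0 ≤ s → s ≤ t → t ≤ T →
    K s t = 1 - ∑ ι : Fin d, ∫ r in s..t, ∫ u in s..r, K s u * K u r * X' ι u * X' ι r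

section

variable {d : ℕ} {T : ℝ} {X' : Fin d → ℝ → ℝ} {K K' : ℝ → ℝ → ℝ}

theorem IsSchwingerDysonKernel.congr (hK : IsSchwingerDysonKernel T X' K)
    (h : EqOn (uncurry K') (uncurry K) (triangle T)) :
    IsSchwingerDysonKernel T X' K' := by
  intro s t hs hst htT
  have hK' {u r : ℝ} (hu : s ≤ u) (hur : u ≤ r) (hr : r ≤ t) : K' u r = K u r :=
    @h (u, r) ⟨hs.trans hu, hur, hr.trans htT⟩
  rw [hK' le_rfl hst le_rfl, hK s t hs hst htT]
  congr 1
  refine Finset.sum_congr rfl fun ι _ => intervalIntegral.integral_congr fun r hr => ?_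
  rw [uIcc_of_le hst] at hr
  refine intervalIntegral.integral_congr fun u hu => ?_
  rw [uIcc_of_le hr.1] at hu
  simp only [hK' le_rfl hu.1 (hu.2.trans hr.2), hK' hu.1 hu.2 hr.2]

theorem IsSchwingerDysonKernel.sub_eq_sum_integral (hX' : ∀ ι, Continuous (X' ι))
    (hK : Continuous (uncurry K)) (hK' : Continuous (uncurry K'))
    (hKs : IsSchwingerDysonKernel T X' K) (hK's : IsSchwingerDysonKernel T X' K')
    {s t : ℝ} (hs : 0 ≤ s) (hst : s ≤ t) (htT : t ≤ T) :
    K s t - K' s t = ∑ ι : Fin d, ∫ r in s..t, ∫ u in s..r,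
      (K' s u * K' u r * X' ι u * X' ι r - K s u * K u r * X' ι u * X' ι r) := by
  rw [hKs s t hs hst htT, hK's s t hs hst htT, sub_sub_sub_cancel_left, ← Finset.sum_sub_distrib]
  exact Finset.sum_congr rfl fun ι _ => integral_triangle_sub
    (G := fun u r => K' s u * K' u r * X' ι u * X' ι r)
    (G' := fun u r => K s u * K u r * X' ι u * X' ι r) (by fun_prop) (by fun_prop) s t

theorem abs_integrand_sub_le (hD : Continuous (uncurry (K - K'))) {M C : ℝ}
    (hKM : ∀ p ∈ triangle T, |K p.1 p.2| ≤ M) (hK'M : ∀ p ∈ triangle T, |K' p.1 p.2| ≤ M)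
    (hXC : ∀ ι, ∀ u ∈ Icc 0 T, |X' ι u| ≤ C) (ι : Fin d) {s u r : ℝ} (hs : 0 ≤ s) (hsu : s ≤ u)
    (hur : u ≤ r) (hrT : r ≤ T) :
    |K' s u * K' u r * X' ι u * X' ι r - K s u * K u r * X' ι u * X' ι r| ≤
      2 * M * C ^ 2 * triangleSup (K - K') r := by
  have hDsu : |K s u - K' s u| ≤ triangleSup (K - K') r :=
    abs_le_triangleSup (p := (s, u)) hD ⟨hs, hsu, hur⟩
  have hDur : |K u r - K' u r| ≤ triangleSup (K - K') r :=
    abs_le_triangleSup (p := (u, r)) hD ⟨hs.trans hsu, hur, le_rfl⟩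
  have hXu : |X' ι u| ≤ C := hXC ι u ⟨hs.trans hsu, hur.trans hrT⟩
  have hXr : |X' ι r| ≤ C := hXC ι r ⟨(hs.trans hsu).trans hur, hrT⟩
  have hC : 0 ≤ C := (abs_nonneg _).trans hXu
  have hKur : |K u r| ≤ M := hKM (u, r) ⟨hs.trans hsu, hur, hrT⟩
  have hK'su : |K' s u| ≤ M := hK'M (s, u) ⟨hs, hsu, hur.trans hrT⟩
  have hF0 := triangleSup_nonneg (D := K - K') r
  have hM : 0 ≤ M := (abs_nonneg _).trans hKur
  calc _ = |K s u * K u r - K' s u * K' u r| * (|X' ι u| * |X' ι r|) := by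
        rw [← abs_mul, ← abs_mul, ← abs_neg]; ring_nf
    _ ≤ (|K s u - K' s u| * |K u r| + |K' s u| * |K u r - K' u r|) * (C * C) :=
        mul_le_mul (abs_mul_sub_mul_le _ _ _ _)
          (mul_le_mul hXu hXr (abs_nonneg _) hC)
          (by positivity) (by positivity)
    _ ≤ (triangleSup (K - K') r * M + M * triangleSup (K - K') r) * (C * C) := by gcongr
    _ = 2 * M * C ^ 2 * triangleSup (K - K') r := by ring

theorem IsSchwingerDysonKernel.abs_sub_le_integral (hX' : ∀ ι, Continuous (X' ι))
    (hK : Continuous (uncurry K)) (hK' : Continuous (uncurry K'))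
    (hKs : IsSchwingerDysonKernel T X' K) (hK's : IsSchwingerDysonKernel T X' K') {M C : ℝ}
    (hKM : ∀ p ∈ triangle T, |K p.1 p.2| ≤ M)
    (hK'M : ∀ p ∈ triangle T, |K' p.1 p.2| ≤ M) (hXC : ∀ ι, ∀ u ∈ Icc 0 T, |X' ι u| ≤ C)
    {s t τ : ℝ} (hs : 0 ≤ s) (hst : s ≤ t) (htτ : t ≤ τ) (hτT : τ ≤ T) :
    |K s t - K' s t| ≤ d * (2 * M * C ^ 2 * T) * ∫ r in 0..τ, triangleSup (K - K') r := by
  set F := triangleSup (K - K')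
  have hD : Continuous (uncurry (K - K')) := hK.sub hK'
  have hM : 0 ≤ M := (abs_nonneg _).trans (hKM (s, t) ⟨hs, hst, htτ.trans hτT⟩)
  have hG0 (r : ℝ) : 0 ≤ 2 * M * C ^ 2 * F r := mul_nonneg (by positivity) (triangleSup_nonneg r)
  have hFi : IntervalIntegrable F volume 0 τ := (monotone_triangleSup hD).intervalIntegrable
  rw [hKs.sub_eq_sum_integral hX' hK hK' hK's hs hst (htτ.trans hτT)]
  calc _ ≤ ∑ ι : Fin d, |∫ r in s..t, ∫ u in s..r,
        (K' s u * K' u r * X' ι u * X' ι r - K s u * K u r * X' ι u * X' ι r)| :=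
        Finset.abs_sum_le_sum_abs _ _
    _ ≤ ∑ ι : Fin d, (t - s) * ∫ r in s..t, 2 * M * C ^ 2 * F r :=
        Finset.sum_le_sum fun ι _ =>
          abs_integral_triangle_le hst ((monotone_triangleSup hD).intervalIntegrable.const_mul _)
            fun r hr u hu => abs_integrand_sub_le hD hKM hK'M hXC ι hs hu.1 hu.2
              (hr.2.trans (htτ.trans hτT))
    _ ≤ ∑ ι : Fin d, T * ∫ r in 0..τ, 2 * M * C ^ 2 * F r := by
        refine Finset.sum_le_sum fun ι _ => mul_le_mul (by linarith) ?_
          (intervalIntegral.integral_nonneg hst fun r _ => hG0 r) (hs.trans (by linarith))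
        exact intervalIntegral.integral_mono_interval hs hst htτ (.of_forall fun r => hG0 r)
          (hFi.const_mul _)
    _ = _ := by simp only [Finset.sum_const, Finset.card_univ, Fintype.card_fin, nsmul_eq_mul,
          intervalIntegral.integral_const_mul]; ring

theorem IsSchwingerDysonKernel.eqOn_of_continuous (hX' : ∀ ι, Continuous (X' ι))
    (hK : Continuous (uncurry K)) (hK' : Continuous (uncurry K'))
    (hKs : IsSchwingerDysonKernel T X' K) (hK's : IsSchwingerDysonKernel T X' K') :
    EqOn (uncurry K) (uncurry K') (triangle T) := by
  rintro ⟨s, t⟩ hp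
  have hT : 0 ≤ T := hp.1.trans (hp.2.1.trans hp.2.2)
  obtain ⟨M₁, hM₁⟩ := (isCompact_triangle T).exists_bound_of_continuousOn hK.continuousOn
  obtain ⟨M₂, hM₂⟩ := (isCompact_triangle T).exists_bound_of_continuousOn hK'.continuousOn
  choose C hC using fun ι => isCompact_Icc.exists_bound_of_continuousOn (hX' ι).continuousOn
  obtain ⟨C₀, hC₀⟩ := Finite.exists_le C
  set M := max M₁ M₂
  set A : ℝ := d * (2 * M * C₀ ^ 2 * T)
  have hM : 0 ≤ M := (norm_nonneg _).trans ((hM₁ _ hp).trans (le_max_left _ _))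
  have hA : 0 ≤ A := by positivity
  have hD : Continuous (uncurry (K - K')) := hK.sub hK'
  have hF : EqOn (triangleSup (K - K')) 0 (Icc 0 T) := by
    refine eqOn_zero_of_le_mul_integral hA (monotone_triangleSup hD).intervalIntegrable
      (fun τ _ => triangleSup_nonneg τ) fun τ hτ => triangleSup_le ?_ fun q hq => ?_
    · exact mul_nonneg hA (intervalIntegral.integral_nonneg hτ.1 fun r _ => triangleSup_nonneg r)
    · exact hKs.abs_sub_le_integral hX' hK hK' hK's
        (fun p hp => (hM₁ p hp).trans (le_max_left _ _))
        (fun p hp => (hM₂ p hp).trans (le_max_right _ _))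
        (fun ι u hu => (hC ι u hu).trans (hC₀ ι)) hq.1 hq.2.1 hq.2.2 hτ.2
  have hDst := abs_le_triangleSup hD hp
  rw [hF ⟨hT, le_rfl⟩] at hDst
  exact sub_eq_zero.1 (abs_nonpos_iff.1 hDst)

end

theorem stmt15_general (d : ℕ) (T : ℝ) (X' : Fin d → ℝ → ℝ)
    (hX' : ∀ i, Continuous (X' i))
    (K K' : ℝ → ℝ → ℝ)
    (hKc : ContinuousOn (fun p : ℝ × ℝ => K p.1 p.2)
      {p : ℝ × ℝ | 0 ≤ p.1 ∧ p.1 ≤ p.2 ∧ p.2 ≤ T})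
    (hK'c : ContinuousOn (fun p : ℝ × ℝ => K' p.1 p.2)
      {p : ℝ × ℝ | 0 ≤ p.1 ∧ p.1 ≤ p.2 ∧ p.2 ≤ T})
    (hK : ∀ s t, 0 ≤ s → s ≤ t → t ≤ T →
      K s t = 1 - ∑ ι : Fin d, ∫ r in s..t, ∫ u in s..r,
        K s u * K u r * X' ι u * X' ι r)
    (hK' : ∀ s t, 0 ≤ s → s ≤ t → t ≤ T →
      K' s t = 1 - ∑ ι : Fin d, ∫ r in s..t, ∫ u in s..r,
        K' s u * K' u r * X' ι u * X' ι r) :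
    ∀ s t, 0 ≤ s → s ≤ t → t ≤ T → K s t = K' s t := by
  obtain ⟨L, hLc, hLK⟩ := exists_continuous_eqOn_of_isClosed (isClosed_triangle T) hKc
  obtain ⟨L', hL'c, hL'K'⟩ := exists_continuous_eqOn_of_isClosed (isClosed_triangle T) hK'c
  have hL : IsSchwingerDysonKernel T X' (curry L) := IsSchwingerDysonKernel.congr hK hLK
  have hL' : IsSchwingerDysonKernel T X' (curry L') := IsSchwingerDysonKernel.congr hK' hL'K'
  intro s t hs hst htT
  have hp : (s, t) ∈ triangle T := ⟨hs, hst, htT⟩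
  calc K s t = L (s, t) := (hLK hp).symm
    _ = L' (s, t) :=
        hL.eqOn_of_continuous (K := curry L) (K' := curry L') hX' hLc hL'c hL' hp
    _ = K' s t := hL'K' hp

/-- uniqueness of continuous solutions of the Schwinger–Dyson
kernel equation driven by a continuously differentiable path `X`. -/
theorem stmt15 (d : ℕ) (T : ℝ) (hT : 0 ≤ T) (X : ℝ → Fin d → ℝ) (X' : Fin d → ℝ → ℝ)
    (hX : ∀ i t, HasDerivAt (fun u => X u i) (X' i t) t)
    (hX' : ∀ i, Continuous (X' i))
    (K K' : ℝ → ℝ → ℝ)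
    (hKc : ContinuousOn (fun p : ℝ × ℝ => K p.1 p.2)
      {p : ℝ × ℝ | 0 ≤ p.1 ∧ p.1 ≤ p.2 ∧ p.2 ≤ T})
    (hK'c : ContinuousOn (fun p : ℝ × ℝ => K' p.1 p.2)
      {p : ℝ × ℝ | 0 ≤ p.1 ∧ p.1 ≤ p.2 ∧ p.2 ≤ T})
    (hK : ∀ s t, 0 ≤ s → s ≤ t → t ≤ T →
      K s t = 1 - ∑ ι : Fin d, ∫ r in s..t, ∫ u in s..r,
        K s u * K u r * X' ι u * X' ι r)
    (hK' : ∀ s t, 0 ≤ s → s ≤ t → t ≤ T →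
      K' s t = 1 - ∑ ι : Fin d, ∫ r in s..t, ∫ u in s..r,
        K' s u * K' u r * X' ι u * X' ι r) :
    ∀ s t, 0 ≤ s → s ≤ t → t ≤ T → K s t = K' s t :=
  stmt15_general d T X' hX' K K' hKc hK'c hK hK'
end

section
/- Let X, Y : [0,T] → ℝ^d be continuously differentiable and define the signature kernel K(t,v) = Σ_{I} S^{(I)}(X)_{0,t} · S^{(I)}(Y)_{0,v}, where the sum is over all words I over {1,…,d} and S^{(I)} denotes the iterated-integral signature coefficient. Then K is well-defined (the series converges absolutely), and K satisfies the Goursat integral equation K(t,v) = 1 + ∫_0^t ∫_0^v K(s,u) ⟨X′(s), Y′(u)⟩ du ds for all (t,v) ∈ [0,T]². -/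
open MeasureTheory intervalIntegral

/-- The signature coefficient `S^{(I)}_{s,t}` of a path with coordinate
derivatives `X' i`. -/
noncomputable def Sig (d : ℕ) (X' : Fin d → ℝ → ℝ) : List (Fin d) → ℝ → ℝ → ℝ
  | [], _, _ => 1
  | i :: I, s, t => ∫ u in s..t, X' i u * Sig d X' I u t

/-!
A nonempty word is `J ++ [i]`, and Fubini on a triangle turns the recursion on the first letter
into one on the last: `S^{J i}(X)_{0,t} = ∫_0^t S^J(X)_{0,s} X'_i(s) ds`. So the nonempty words
contribute `Σ_{i,J} ∫_0^t ∫_0^v S^J(X)_{0,s} S^J(Y)_{0,u} X'_i(s) Y'_i(u) du ds` to the kernel,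
and summing under the integrals gives `∫_0^t ∫_0^v K(s,u) ⟨X'(s), Y'(u)⟩ du ds`. Both the
interchange and the absolute convergence come from the factorial decay
`|S^J(X)_{0,s}| ≤ (M s)^|J| / |J|!`, `M` a bound for `X'` on `[0, s]`, since there are only
`d^n` words of length `n`.
-/

open Set Function
open scoped Nat Interval

theorem tsum_intervalIntegral_eq_of_norm_le {ι E : Type*} [Countable ι] [NormedAddCommGroup E]
    [NormedSpace ℝ E] [CompleteSpace E] {F : ι → ℝ → E} {c : ι → ℝ} {a b : ℝ}
    (hF : ∀ n, IntervalIntegrable (F n) volume a b) (hc : Summable c)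
    (hFc : ∀ n, ∀ x ∈ Ι a b, ‖F n x‖ ≤ c n) :
    ∑' n, ∫ x in a..b, F n x = ∫ x in a..b, ∑' n, F n x :=
  (hasSum_integral_of_dominated_convergence (fun n _ => c n)
    (fun n => (hF n).def'.aestronglyMeasurable) (fun n => ae_of_all _ (hFc n))
    (ae_of_all _ fun _ _ => hc) intervalIntegrable_const
    (ae_of_all _ fun x hx => (hc.of_norm_bounded fun n => hFc n x hx).hasSum)).tsum_eq

theorem integral_integral_triangle_swap {E : Type*} [NormedAddCommGroup E] [NormedSpace ℝ E]
    [CompleteSpace E] {f : ℝ → ℝ → E} (hf : Continuous (uncurry f)) {s t : ℝ} (hst : s ≤ t) :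
    ∫ u in s..t, ∫ w in u..t, f u w = ∫ w in s..t, ∫ u in s..w, f u w := by
  set G : ℝ × ℝ → E := {p : ℝ × ℝ | p.1 ≤ p.2}.indicator (uncurry f)
  have hG : IntegrableOn G (Ι s t ×ˢ Ι s t) :=
    ((hf.continuousOn.integrableOn_compact (isCompact_uIcc.prod isCompact_uIcc)).mono_set
      (prod_mono uIoc_subset_uIcc uIoc_subset_uIcc)).indicator
      (measurableSet_le measurable_fst measurable_snd)
  have h_left : ∀ u ∈ Ι s t, ∫ w in s..t, G (u, w) = ∫ w in u..t, f u w := by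
    intro u hu
    rw [uIoc_of_le hst] at hu
    have hIci : (fun w => G (u, w)) = (Ici u).indicator (f u) := by
      ext w; simp [G, indicator_apply]
    have hset : Ioc s t ∩ Ici u = Icc u t := by
      ext w; simp only [mem_inter_iff, mem_Ioc, mem_Ici, mem_Icc]
      constructor
      · rintro ⟨⟨-, hwt⟩, huw⟩; exact ⟨huw, hwt⟩
      · rintro ⟨huw, hwt⟩; exact ⟨⟨hu.1.trans_le huw, hwt⟩, huw⟩
    rw [hIci, integral_of_le hst, setIntegral_indicator measurableSet_Ici, hset,
      integral_Icc_eq_integral_Ioc, integral_of_le hu.2]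
  have h_right : ∀ w ∈ uIcc s t, ∫ u in s..t, G (u, w) = ∫ u in s..w, f u w := by
    intro w hw
    rw [uIcc_of_le hst] at hw
    have hIic : (fun u => G (u, w)) = {u | u ≤ w}.indicator (fun u => f u w) := by
      ext u; simp [G, indicator_apply]
    rw [hIic, intervalIntegral.integral_indicator hw]
  calc ∫ u in s..t, ∫ w in u..t, f u w = ∫ u in s..t, ∫ w in s..t, G (u, w) :=
        integral_congr_ae (ae_of_all _ fun u hu => (h_left u hu).symm)
    _ = ∫ w in s..t, ∫ u in s..t, G (u, w) := intervalIntegral_intervalIntegral_swap hG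
    _ = ∫ w in s..t, ∫ u in s..w, f u w := integral_congr h_right

theorem tsum_integral_mul_integral {ι : Type*} [Countable ι] {α β : ι → ℝ → ℝ} {a b : ι → ℝ}
    {s₀ s₁ u₀ u₁ : ℝ} (hα : ∀ p, Continuous (α p)) (hβ : ∀ p, Continuous (β p))
    (hαa : ∀ p, ∀ s ∈ uIcc s₀ s₁, |α p s| ≤ a p) (hβb : ∀ p, ∀ u ∈ uIcc u₀ u₁, |β p u| ≤ b p)
    (hab : Summable fun p => a p * b p) :
    ∑' p, (∫ s in s₀..s₁, α p s) * (∫ u in u₀..u₁, β p u)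
      = ∫ s in s₀..s₁, ∫ u in u₀..u₁, ∑' p, α p s * β p u := by
  have ha : ∀ p, 0 ≤ a p := fun p => (abs_nonneg _).trans (hαa p s₀ left_mem_uIcc)
  have h_inner : ∀ s ∈ uIcc s₀ s₁,
      ∑' p, α p s * ∫ u in u₀..u₁, β p u = ∫ u in u₀..u₁, ∑' p, α p s * β p u := by
    intro s hs
    simp_rw [← intervalIntegral.integral_const_mul]
    refine tsum_intervalIntegral_eq_of_norm_le
      (fun p => (continuous_const.mul (hβ p)).intervalIntegrable _ _) hab fun p u hu => ?_
    rw [norm_mul]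
    exact mul_le_mul (hαa p s hs) (hβb p u (uIoc_subset_uIcc hu)) (norm_nonneg _) (ha p)
  calc ∑' p, (∫ s in s₀..s₁, α p s) * (∫ u in u₀..u₁, β p u)
      = ∑' p, ∫ s in s₀..s₁, α p s * ∫ u in u₀..u₁, β p u := by
        simp_rw [intervalIntegral.integral_mul_const]
    _ = ∫ s in s₀..s₁, ∑' p, α p s * ∫ u in u₀..u₁, β p u := by
        refine tsum_intervalIntegral_eq_of_norm_le
          (fun p => ((hα p).mul continuous_const).intervalIntegrable _ _)
          (c := fun p => a p * b p * |u₁ - u₀|) (hab.mul_right _) fun p s hs => ?_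
        rw [norm_mul, mul_assoc]
        exact mul_le_mul (hαa p s (uIoc_subset_uIcc hs))
          (norm_integral_le_of_norm_le_const fun u hu => hβb p u (uIoc_subset_uIcc hu))
          (norm_nonneg _) (ha p)
    _ = ∫ s in s₀..s₁, ∫ u in u₀..u₁, ∑' p, α p s * β p u := integral_congr h_inner

theorem integral_mul_pow_sub_div_factorial (M s t : ℝ) (n : ℕ) :
    ∫ u in s..t, M * ((M * (t - u)) ^ n / n !) = (M * (t - s)) ^ (n + 1) / (n + 1)! := by
  have hpow : ∫ u in s..t, (t - u) ^ n = (t - s) ^ (n + 1) / (n + 1) := by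
    simp [intervalIntegral.integral_comp_sub_left (fun x => x ^ n) t, integral_pow]
  have hfun : ∀ u, M * ((M * (t - u)) ^ n / n !) = M ^ (n + 1) / n ! * (t - u) ^ n := by
    intro u; rw [mul_pow]; ring
  simp_rw [hfun, intervalIntegral.integral_const_mul, hpow, Nat.factorial_succ]
  push_cast
  rw [mul_pow, div_mul_div_comm, mul_comm (n ! : ℝ)]

theorem exists_abs_le_of_continuous {ι : Type*} [Fintype ι] {Z : ι → ℝ → ℝ}
    (hZ : ∀ i, Continuous (Z i)) (a b : ℝ) : ∃ M, 0 ≤ M ∧ ∀ i, ∀ u ∈ Icc a b, |Z i u| ≤ M := by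
  obtain ⟨C, hC⟩ := isCompact_Icc.exists_bound_of_continuousOn (continuous_pi hZ).continuousOn
  exact ⟨max C 0, le_max_right _ _, fun i u hu =>
    ((norm_le_pi_norm (fun j => Z j u) i).trans (hC u hu)).trans (le_max_left _ _)⟩

section Signature

variable {d : ℕ} {X' : Fin d → ℝ → ℝ}

theorem continuous_sig (hX' : ∀ i, Continuous (X' i)) (I : List (Fin d)) :
    Continuous fun p : ℝ × ℝ => Sig d X' I p.1 p.2 := by
  induction I with
  | nil => exact continuous_const
  | cons i I ih =>
    set f : ℝ × ℝ → ℝ → ℝ := fun p u => X' i u * Sig d X' I u p.2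
    have hf : Continuous (uncurry f) :=
      ((hX' i).comp continuous_snd).mul (ih.comp (continuous_snd.prodMk continuous_fst.snd))
    have hsub : ∀ p : ℝ × ℝ,
        (∫ u in (0 : ℝ)..p.2, f p u) - (∫ u in (0 : ℝ)..p.1, f p u) = Sig d X' (i :: I) p.1 p.2 :=
      fun p => integral_interval_sub_left
        ((hf.comp (continuous_const.prodMk continuous_id)).intervalIntegrable _ _)
        ((hf.comp (continuous_const.prodMk continuous_id)).intervalIntegrable _ _)
    exact ((continuous_parametric_intervalIntegral_of_continuous hf continuous_snd).sub
      (continuous_parametric_intervalIntegral_of_continuous hf continuous_fst)).congr hsub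

theorem continuous_sig_right (hX' : ∀ i, Continuous (X' i)) (I : List (Fin d)) (s : ℝ) :
    Continuous (Sig d X' I s) :=
  (continuous_sig hX' I).comp (continuous_const.prodMk continuous_id)

theorem sig_append_singleton (hX' : ∀ i, Continuous (X' i)) (I : List (Fin d)) (i : Fin d)
    {s t : ℝ} (hst : s ≤ t) :
    Sig d X' (I ++ [i]) s t = ∫ w in s..t, Sig d X' I s w * X' i w := by
  induction I generalizing s with
  | nil => simp only [List.nil_append, Sig, one_mul, mul_one]
  | cons j J ih =>
    have hf : Continuous (uncurry fun u w => X' j u * Sig d X' J u w * X' i w) :=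
      (((hX' j).comp continuous_fst).mul (continuous_sig hX' J)).mul
        ((hX' i).comp continuous_snd)
    calc Sig d X' (j :: J ++ [i]) s t
        = ∫ u in s..t, X' j u * Sig d X' (J ++ [i]) u t := rfl
      _ = ∫ u in s..t, ∫ w in u..t, X' j u * Sig d X' J u w * X' i w := by
          refine integral_congr fun u hu => ?_
          rw [uIcc_of_le hst] at hu
          simp only [ih hu.2, ← intervalIntegral.integral_const_mul, mul_assoc]
      _ = ∫ w in s..t, ∫ u in s..w, X' j u * Sig d X' J u w * X' i w :=
          integral_integral_triangle_swap hf hst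
      _ = ∫ w in s..t, Sig d X' (j :: J) s w * X' i w := by
          simp only [Sig, intervalIntegral.integral_mul_const]

theorem abs_sig_le {M s t : ℝ} (hM : ∀ i, ∀ u ∈ Icc s t, |X' i u| ≤ M) (I : List (Fin d))
    (hst : s ≤ t) : |Sig d X' I s t| ≤ (M * (t - s)) ^ I.length / I.length ! := by
  induction I generalizing s with
  | nil => simp [Sig]
  | cons i I ih =>
    rw [List.length_cons, ← integral_mul_pow_sub_div_factorial]
    change ‖∫ u in s..t, X' i u * Sig d X' I u t‖ ≤ _
    refine norm_integral_le_of_norm_le hst (ae_of_all _ fun u hu => ?_)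
      ((by fun_prop : Continuous fun u => M * ((M * (t - u)) ^ I.length / I.length !))
        |>.intervalIntegrable _ _)
    have hXu : |X' i u| ≤ M := hM i u (Ioc_subset_Icc_self hu)
    rw [norm_mul]
    exact mul_le_mul hXu (ih (fun j w hw => hM j w ⟨hu.1.le.trans hw.1, hw.2⟩) hu.2)
      (norm_nonneg _) ((abs_nonneg _).trans hXu)

theorem abs_sig_zero_le {M T : ℝ} (hM0 : 0 ≤ M) (hM : ∀ i, ∀ u ∈ Icc 0 T, |X' i u| ≤ M)
    (I : List (Fin d)) {s : ℝ} (hs : s ∈ Icc 0 T) :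
    |Sig d X' I 0 s| ≤ (M * T) ^ I.length / I.length ! := by
  refine (abs_sig_le (fun i u hu => hM i u ⟨hu.1, hu.2.trans hs.2⟩) I hs.1).trans ?_
  rw [sub_zero]
  gcongr
  exacts [mul_nonneg hM0 hs.1, hs.2]

end Signature

section Words

variable {α : Type*}

theorem summable_pow_div_factorial_length [Fintype α] {B : ℝ} (hB : 0 ≤ B) :
    Summable fun I : List α => B ^ I.length / I.length ! := by
  rw [← List.equivSigmaTuple.symm.summable_iff]
  simp only [comp_def, List.equivSigmaTuple, Equiv.coe_fn_symm_mk, List.length_ofFn]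
  refine (summable_sigma_of_nonneg fun _ => by positivity).2 ⟨fun _ => .of_finite, ?_⟩
  simp only [tsum_const, Nat.card_eq_fintype_card, Fintype.card_fun, Fintype.card_fin,
    nsmul_eq_mul]
  convert Real.summable_pow_div_factorial (Fintype.card α * B) using 2 with n
  push_cast
  ring

theorem summable_pow_div_factorial_mul_length [Fintype α] {A C : ℝ} (hA : 0 ≤ A) (hC : 0 ≤ C) :
    Summable fun I : List α => A ^ I.length / I.length ! * (C ^ I.length / I.length !) := by
  refine (summable_pow_div_factorial_length (mul_nonneg hA hC)).of_nonneg_of_le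
    (fun _ => by positivity) fun I => ?_
  rw [mul_pow, div_mul_div_comm]
  exact div_le_div_of_nonneg_left (by positivity) (by positivity)
    (le_mul_of_one_le_right (by positivity) (mod_cast Nat.one_le_of_lt (Nat.factorial_pos _)))

theorem tsum_list_eq_add_tsum_append_singleton {E : Type*} [AddCommGroup E] [TopologicalSpace E]
    [IsTopologicalAddGroup E] [T2Space E] {f : List α → E} (hf : Summable f) :
    ∑' I, f I = f [] + ∑' p : α × List α, f (p.2 ++ [p.1]) := by
  classical
  have hinj : Injective fun p : α × List α => p.2 ++ [p.1] := by
    rintro ⟨i, J⟩ ⟨i', J'⟩ h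
    obtain ⟨hJ, hi⟩ := List.append_inj' h rfl
    exact Prod.ext (List.singleton_inj.1 hi) hJ
  have hsupp : support (fun I => if I = [] then 0 else f I) ⊆
      range fun p : α × List α => p.2 ++ [p.1] :=
    fun I hI => ⟨(I.getLast fun h => hI (if_pos h), I.dropLast), List.dropLast_append_getLast _⟩
  rw [hf.tsum_eq_add_tsum_ite [], ← hinj.tsum_eq hsupp]
  exact congrArg _ (tsum_congr fun p => if_neg (by simp))

end Words

section Kernel

variable {d : ℕ} {X' Y' : Fin d → ℝ → ℝ}

theorem summable_norm_sig_mul_sig (hX' : ∀ i, Continuous (X' i)) (hY' : ∀ i, Continuous (Y' i))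
    {s u : ℝ} (hs : 0 ≤ s) (hu : 0 ≤ u) :
    Summable fun I => ‖Sig d X' I 0 s * Sig d Y' I 0 u‖ := by
  obtain ⟨M, hM0, hM⟩ := exists_abs_le_of_continuous hX' 0 s
  obtain ⟨N, hN0, hN⟩ := exists_abs_le_of_continuous hY' 0 u
  refine (summable_pow_div_factorial_mul_length (mul_nonneg hM0 hs) (mul_nonneg hN0 hu))
    |>.of_nonneg_of_le (fun _ => norm_nonneg _) fun I => ?_
  exact norm_mul_le_of_le (abs_sig_zero_le hM0 hM I ⟨hs, le_rfl⟩)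
    (abs_sig_zero_le hN0 hN I ⟨hu, le_rfl⟩)

theorem tsum_sig_mul_deriv_mul_sig_mul_deriv (hX' : ∀ i, Continuous (X' i))
    (hY' : ∀ i, Continuous (Y' i)) {s u : ℝ} (hs : 0 ≤ s) (hu : 0 ≤ u) :
    ∑' p : Fin d × List (Fin d), Sig d X' p.2 0 s * X' p.1 s * (Sig d Y' p.2 0 u * Y' p.1 u)
      = (∑' I, Sig d X' I 0 s * Sig d Y' I 0 u) * ∑ i, X' i s * Y' i u := by
  rw [mul_comm, ← tsum_fintype (L := SummationFilter.unconditional _),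
    tsum_mul_tsum_of_summable_norm (Summable.of_finite (f := fun i => ‖X' i s * Y' i u‖))
      (summable_norm_sig_mul_sig hX' hY' hs hu)]
  exact tsum_congr fun p => by ring

theorem tsum_sig_append_singleton_mul_sig_append_singleton (hX' : ∀ i, Continuous (X' i))
    (hY' : ∀ i, Continuous (Y' i)) {t v : ℝ} (ht : 0 ≤ t) (hv : 0 ≤ v) :
    ∑' p : Fin d × List (Fin d), Sig d X' (p.2 ++ [p.1]) 0 t * Sig d Y' (p.2 ++ [p.1]) 0 v
      = ∫ s in (0 : ℝ)..t, ∫ u in (0 : ℝ)..v,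
          (∑' I, Sig d X' I 0 s * Sig d Y' I 0 u) * ∑ i, X' i s * Y' i u := by
  obtain ⟨M, hM0, hM⟩ := exists_abs_le_of_continuous hX' 0 t
  obtain ⟨N, hN0, hN⟩ := exists_abs_le_of_continuous hY' 0 v
  have hab : Summable fun p : Fin d × List (Fin d) =>
      (M * t) ^ p.2.length / p.2.length ! * M * ((N * v) ^ p.2.length / p.2.length ! * N) :=
    ((Summable.of_finite (f := fun _ : Fin d => M * N)).mul_of_nonneg
      (summable_pow_div_factorial_mul_length (mul_nonneg hM0 ht) (mul_nonneg hN0 hv))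
      (fun _ => by positivity) (fun _ => by positivity)).congr fun p => by ring
  simp_rw [sig_append_singleton hX' _ _ ht, sig_append_singleton hY' _ _ hv]
  rw [tsum_integral_mul_integral (α := fun p s => Sig d X' p.2 0 s * X' p.1 s)
    (β := fun p u => Sig d Y' p.2 0 u * Y' p.1 u)
    (fun p => (continuous_sig_right hX' p.2 0).mul (hX' p.1))
    (fun p => (continuous_sig_right hY' p.2 0).mul (hY' p.1))
    (fun p s hs => by
      rw [uIcc_of_le ht] at hs
      exact norm_mul_le_of_le (a₂ := X' p.1 s) (abs_sig_zero_le hM0 hM _ hs) (hM p.1 s hs))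
    (fun p u hu => by
      rw [uIcc_of_le hv] at hu
      exact norm_mul_le_of_le (a₂ := Y' p.1 u) (abs_sig_zero_le hN0 hN _ hu) (hN p.1 u hu))
    hab]
  refine integral_congr fun s hs => integral_congr fun u hu => ?_
  rw [uIcc_of_le ht] at hs
  rw [uIcc_of_le hv] at hu
  exact tsum_sig_mul_deriv_mul_sig_mul_deriv hX' hY' hs.1 hu.1

end Kernel

theorem stmt16_general (d : ℕ) (T : ℝ)
    (X' Y' : Fin d → ℝ → ℝ)
    (hX' : ∀ i, Continuous (X' i)) (hY' : ∀ i, Continuous (Y' i))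
    (t v : ℝ) (ht : t ∈ Set.Icc (0 : ℝ) T) (hv : v ∈ Set.Icc (0 : ℝ) T) :
    Summable (fun I : List (Fin d) => Sig d X' I 0 t * Sig d Y' I 0 v) ∧
    (∑' I : List (Fin d), Sig d X' I 0 t * Sig d Y' I 0 v)
      = 1 + ∫ s in (0 : ℝ)..t, ∫ u in (0 : ℝ)..v,
          (∑' I : List (Fin d), Sig d X' I 0 s * Sig d Y' I 0 u)
            * (∑ i : Fin d, X' i s * Y' i u) := by
  have hK := (summable_norm_sig_mul_sig hX' hY' ht.1 hv.1).of_norm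
  refine ⟨hK, ?_⟩
  rw [tsum_list_eq_add_tsum_append_singleton hK,
    tsum_sig_append_singleton_mul_sig_append_singleton hX' hY' ht.1 hv.1]
  exact congrArg (· + _) (one_mul 1)

/-- the signature kernel
`K(t,v) = Σ_I S^{(I)}(X)_{0,t} S^{(I)}(Y)_{0,v}` is well-defined (the series
converges absolutely) and satisfies the Goursat integral equation
`K(t,v) = 1 + ∫_0^t ∫_0^v K(s,u) ⟨X'(s), Y'(u)⟩ du ds`. -/
theorem stmt16 (d : ℕ) (T : ℝ) (hT : 0 ≤ T)
    (X Y : ℝ → Fin d → ℝ) (X' Y' : Fin d → ℝ → ℝ)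
    (hX : ∀ i t, HasDerivAt (fun u => X u i) (X' i t) t)
    (hY : ∀ i t, HasDerivAt (fun u => Y u i) (Y' i t) t)
    (hX' : ∀ i, Continuous (X' i)) (hY' : ∀ i, Continuous (Y' i))
    (t v : ℝ) (ht : t ∈ Set.Icc (0 : ℝ) T) (hv : v ∈ Set.Icc (0 : ℝ) T) :
    Summable (fun I : List (Fin d) => Sig d X' I 0 t * Sig d Y' I 0 v) ∧
    (∑' I : List (Fin d), Sig d X' I 0 t * Sig d Y' I 0 v)
      = 1 + ∫ s in (0 : ℝ)..t, ∫ u in (0 : ℝ)..v,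
          (∑' I : List (Fin d), Sig d X' I 0 s * Sig d Y' I 0 u)
            * (∑ i : Fin d, X' i s * Y' i u) :=
  stmt16_general d T X' Y' hX' hY' t v ht hv
end

section
/- Let ω : {(s,t) : a ≤ s ≤ t ≤ b} → [0,∞) be a control (continuous, superadditive: ω(s,u) + ω(u,t) ≤ ω(s,t) for s ≤ u ≤ t, and ω(s,s) = 0), let p ≥ 1, and let f, g : Δ_{[a,b]} → F (F a normed space) satisfy ‖f_{s,t}‖ ≤ C₁ ω(s,t)^{θ₁} and ‖g_{s,t}‖ ≤ C₂ ω(s,t)^{θ₂} with θ₁ + θ₂ > 1. Then for any sequence of partitions P_n of [a,b] with mesh ω-size tending to 0, the Riemann-type sums Σ_{[u,v] ∈ P_n} f_{u,v} · g_{u,v} converge to 0; more precisely, |Σ_{[u,v] ∈ P} f_{u,v} g_{u,v}| ≤ C₁ C₂ (max_{[u,v]∈P} ω(u,v))^{θ₁+θ₂−1} · ω(a,b). -/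
/-!
Each term satisfies `‖g_{u,v} f_{u,v}‖ ≤ C₁ C₂ ω(u,v)^{θ₁+θ₂} ≤ C₁ C₂ M^{θ₁+θ₂-1} ω(u,v)`, and
superadditivity bounds `Σ ω(u,v)` over the partition by `ω(a,b)`. Since `θ₁ + θ₂ - 1 > 0`, the
resulting bound tends to `0` with the mesh.
-/

open Filter

theorem sum_range_le_of_superadditive {α β : Type*} [AddCommMonoid β] [PartialOrder β]
    [IsOrderedAddMonoid β] (ω : α → α → β) (t : ℕ → α) (n : ℕ)
    (h0 : 0 ≤ ω (t 0) (t 0))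
    (hsup : ∀ k < n, ω (t 0) (t k) + ω (t k) (t (k + 1)) ≤ ω (t 0) (t (k + 1))) :
    ∑ k ∈ Finset.range n, ω (t k) (t (k + 1)) ≤ ω (t 0) (t n) := by
  induction n with
  | zero => simpa using h0
  | succ n ih =>
    rw [Finset.sum_range_succ]
    calc _ ≤ ω (t 0) (t n) + ω (t n) (t (n + 1)) := by
          gcongr
          exact ih fun k hk => hsup k (Nat.lt_succ_of_lt hk)
      _ ≤ _ := hsup n n.lt_succ_self

theorem norm_smul_le_mul_rpow_add {𝕜 F : Type*} [NormedField 𝕜] [SeminormedAddCommGroup F]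
    [NormedSpace 𝕜 F] {c : 𝕜} {v : F} {x C₁ C₂ θ₁ θ₂ : ℝ} (hx : 0 ≤ x) (hθ : θ₁ + θ₂ ≠ 0)
    (hv : ‖v‖ ≤ C₁ * x ^ θ₁) (hc : ‖c‖ ≤ C₂ * x ^ θ₂) :
    ‖c • v‖ ≤ C₁ * C₂ * x ^ (θ₁ + θ₂) :=
  calc ‖c • v‖ ≤ (C₂ * x ^ θ₂) * (C₁ * x ^ θ₁) := by
        rw [norm_smul]
        exact mul_le_mul hc hv (norm_nonneg _) ((norm_nonneg _).trans hc)
    _ = C₁ * C₂ * x ^ (θ₁ + θ₂) := by rw [Real.rpow_add' hx hθ]; ring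

theorem Real.rpow_le_rpow_sub_one_mul {x M θ : ℝ} (hx : 0 ≤ x) (hxM : x ≤ M) (hθ : 1 ≤ θ) :
    x ^ θ ≤ M ^ (θ - 1) * x :=
  calc x ^ θ = x ^ (θ - 1) * x := by
        rw [← Real.rpow_add_one' hx (by linarith), sub_add_cancel]
    _ ≤ M ^ (θ - 1) * x := by gcongr

theorem norm_sum_smul_le_of_superadditive {F : Type*} [SeminormedAddCommGroup F]
    [NormedSpace ℝ F] {a b : ℝ} {ω : ℝ → ℝ → ℝ} (hω0 : ∀ s, ω s s = 0)
    (hωnn : ∀ s t, a ≤ s → s ≤ t → t ≤ b → 0 ≤ ω s t)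
    (hωsup : ∀ s u t, a ≤ s → s ≤ u → u ≤ t → t ≤ b → ω s u + ω u t ≤ ω s t)
    {f : ℝ → ℝ → F} {g : ℝ → ℝ → ℝ} {C₁ C₂ θ₁ θ₂ : ℝ} (hC₁ : 0 ≤ C₁) (hC₂ : 0 ≤ C₂)
    (hθ : 1 < θ₁ + θ₂)
    (hf : ∀ s t, a ≤ s → s ≤ t → t ≤ b → ‖f s t‖ ≤ C₁ * ω s t ^ θ₁)
    (hg : ∀ s t, a ≤ s → s ≤ t → t ≤ b → |g s t| ≤ C₂ * ω s t ^ θ₂)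
    (n : ℕ) (t : ℕ → ℝ) (ht0 : t 0 = a) (htn : t n = b)
    (hmem : ∀ k, k ≤ n → a ≤ t k ∧ t k ≤ b) (hmono : ∀ k, k < n → t k ≤ t (k + 1))
    (M : ℝ) (hM : 0 ≤ M) (hmesh : ∀ k, k < n → ω (t k) (t (k + 1)) ≤ M) :
    ‖∑ k ∈ Finset.range n, g (t k) (t (k + 1)) • f (t k) (t (k + 1))‖
      ≤ C₁ * C₂ * M ^ (θ₁ + θ₂ - 1) * ω a b := by
  have hω_sum : ∑ k ∈ Finset.range n, ω (t k) (t (k + 1)) ≤ ω a b := by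
    rw [← ht0, ← htn]
    refine sum_range_le_of_superadditive ω t n (hω0 _).ge fun k hk => ?_
    rw [ht0]
    exact hωsup _ _ _ le_rfl (hmem k hk.le).1 (hmono k hk) (hmem (k + 1) hk).2
  have hterm : ∀ k ∈ Finset.range n, ‖g (t k) (t (k + 1)) • f (t k) (t (k + 1))‖
      ≤ C₁ * C₂ * M ^ (θ₁ + θ₂ - 1) * ω (t k) (t (k + 1)) := by
    intro k hk
    rw [Finset.mem_range] at hk
    obtain ⟨hak, -⟩ := hmem k hk.le
    obtain ⟨-, hkb⟩ := hmem (k + 1) hk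
    have hkk := hmono k hk
    have hωk := hωnn _ _ hak hkk hkb
    calc _ ≤ C₁ * C₂ * ω (t k) (t (k + 1)) ^ (θ₁ + θ₂) :=
          norm_smul_le_mul_rpow_add hωk (by linarith) (hf _ _ hak hkk hkb)
            ((Real.norm_eq_abs _).trans_le (hg _ _ hak hkk hkb))
      _ ≤ C₁ * C₂ * (M ^ (θ₁ + θ₂ - 1) * ω (t k) (t (k + 1))) := by
          gcongr
          exact Real.rpow_le_rpow_sub_one_mul hωk (hmesh k hk) hθ.le
      _ = _ := by ring
  calc _ ≤ ∑ k ∈ Finset.range n, ‖g (t k) (t (k + 1)) • f (t k) (t (k + 1))‖ :=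
        norm_sum_le _ _
    _ ≤ ∑ k ∈ Finset.range n, C₁ * C₂ * M ^ (θ₁ + θ₂ - 1) * ω (t k) (t (k + 1)) :=
        Finset.sum_le_sum hterm
    _ ≤ C₁ * C₂ * M ^ (θ₁ + θ₂ - 1) * ω a b := by
        rw [← Finset.mul_sum]
        gcongr

theorem stmt17_general {F : Type*} [NormedAddCommGroup F] [NormedSpace ℝ F]
    (a b : ℝ) (ω : ℝ → ℝ → ℝ)
    (hω0 : ∀ s, ω s s = 0)
    (hωnn : ∀ s t, a ≤ s → s ≤ t → t ≤ b → 0 ≤ ω s t)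
    (hωsup : ∀ s u t, a ≤ s → s ≤ u → u ≤ t → t ≤ b → ω s u + ω u t ≤ ω s t)
    (f : ℝ → ℝ → F) (g : ℝ → ℝ → ℝ)
    (C₁ C₂ θ₁ θ₂ : ℝ) (hC₁ : 0 ≤ C₁) (hC₂ : 0 ≤ C₂)
    (hθ : 1 < θ₁ + θ₂)
    (hf : ∀ s t, a ≤ s → s ≤ t → t ≤ b → ‖f s t‖ ≤ C₁ * ω s t ^ θ₁)
    (hg : ∀ s t, a ≤ s → s ≤ t → t ≤ b → |g s t| ≤ C₂ * ω s t ^ θ₂) :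
    (∀ (n : ℕ) (t : ℕ → ℝ), t 0 = a → t n = b →
      (∀ k, k ≤ n → a ≤ t k ∧ t k ≤ b) →
      (∀ k, k < n → t k ≤ t (k + 1)) →
      ∀ M : ℝ, 0 ≤ M → (∀ k, k < n → ω (t k) (t (k + 1)) ≤ M) →
        ‖∑ k ∈ Finset.range n, g (t k) (t (k + 1)) • f (t k) (t (k + 1))‖
          ≤ C₁ * C₂ * M ^ (θ₁ + θ₂ - 1) * ω a b) ∧
    (∀ (n : ℕ → ℕ) (t : ℕ → ℕ → ℝ) (mesh : ℕ → ℝ),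
      (∀ j, t j 0 = a ∧ t j (n j) = b ∧
        (∀ k, k ≤ n j → a ≤ t j k ∧ t j k ≤ b) ∧
        (∀ k, k < n j → t j k ≤ t j (k + 1)) ∧
        0 ≤ mesh j ∧ (∀ k, k < n j → ω (t j k) (t j (k + 1)) ≤ mesh j)) →
      Tendsto mesh atTop (nhds 0) →
      Tendsto (fun j => ∑ k ∈ Finset.range (n j),
          g (t j k) (t j (k + 1)) • f (t j k) (t j (k + 1)))
        atTop (nhds 0)) := by
  have hbound := norm_sum_smul_le_of_superadditive hω0 hωnn hωsup hC₁ hC₂ hθ hf hg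
  refine ⟨hbound, fun n t mesh hpart hmesh_lim => ?_⟩
  refine squeeze_zero_norm (a := fun j => C₁ * C₂ * mesh j ^ (θ₁ + θ₂ - 1) * ω a b)
    (fun j => ?_) ?_
  · obtain ⟨ht0, htn, hmem, hmono, hM, hmesh⟩ := hpart j
    exact hbound (n j) (t j) ht0 htn hmem hmono (mesh j) hM hmesh
  · simpa using ((hmesh_lim.rpow_const_nhds_zero (sub_pos.2 hθ)).const_mul (C₁ * C₂)).mul_const
      (ω a b)

/-- vanishing of off-diagonal Riemann-type sums: if
`‖f_{s,t}‖ ≤ C₁ ω(s,t)^{θ₁}` and `|g_{s,t}| ≤ C₂ ω(s,t)^{θ₂}` with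
`θ₁ + θ₂ > 1` and `ω` a control, then for every partition of `[a,b]` with mesh
`ω`-size at most `M`, `‖Σ g·f‖ ≤ C₁ C₂ M^{θ₁+θ₂-1} ω(a,b)`, and the sums along
any sequence of partitions with mesh tending to `0` converge to `0`. -/
theorem stmt17 {F : Type*} [NormedAddCommGroup F] [NormedSpace ℝ F]
    (a b : ℝ) (hab : a ≤ b) (ω : ℝ → ℝ → ℝ)
    (hω0 : ∀ s, ω s s = 0)
    (hωnn : ∀ s t, a ≤ s → s ≤ t → t ≤ b → 0 ≤ ω s t)
    (hωcont : ContinuousOn (fun p : ℝ × ℝ => ω p.1 p.2)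
      {p : ℝ × ℝ | a ≤ p.1 ∧ p.1 ≤ p.2 ∧ p.2 ≤ b})
    (hωsup : ∀ s u t, a ≤ s → s ≤ u → u ≤ t → t ≤ b → ω s u + ω u t ≤ ω s t)
    (p : ℝ) (hp : 1 ≤ p)
    (f : ℝ → ℝ → F) (g : ℝ → ℝ → ℝ)
    (C₁ C₂ θ₁ θ₂ : ℝ) (hC₁ : 0 ≤ C₁) (hC₂ : 0 ≤ C₂)
    (hθ₁ : 0 ≤ θ₁) (hθ₂ : 0 ≤ θ₂) (hθ : 1 < θ₁ + θ₂)
    (hf : ∀ s t, a ≤ s → s ≤ t → t ≤ b → ‖f s t‖ ≤ C₁ * ω s t ^ θ₁)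
    (hg : ∀ s t, a ≤ s → s ≤ t → t ≤ b → |g s t| ≤ C₂ * ω s t ^ θ₂) :
    (∀ (n : ℕ) (t : ℕ → ℝ), t 0 = a → t n = b →
      (∀ k, k ≤ n → a ≤ t k ∧ t k ≤ b) →
      (∀ k, k < n → t k ≤ t (k + 1)) →
      ∀ M : ℝ, 0 ≤ M → (∀ k, k < n → ω (t k) (t (k + 1)) ≤ M) →
        ‖∑ k ∈ Finset.range n, g (t k) (t (k + 1)) • f (t k) (t (k + 1))‖
          ≤ C₁ * C₂ * M ^ (θ₁ + θ₂ - 1) * ω a b) ∧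
    (∀ (n : ℕ → ℕ) (t : ℕ → ℕ → ℝ) (mesh : ℕ → ℝ),
      (∀ j, t j 0 = a ∧ t j (n j) = b ∧
        (∀ k, k ≤ n j → a ≤ t j k ∧ t j k ≤ b) ∧
        (∀ k, k < n j → t j k ≤ t j (k + 1)) ∧
        0 ≤ mesh j ∧ (∀ k, k < n j → ω (t j k) (t j (k + 1)) ≤ mesh j)) →
      Tendsto mesh atTop (nhds 0) →
      Tendsto (fun j => ∑ k ∈ Finset.range (n j),
          g (t j k) (t j (k + 1)) • f (t j k) (t j (k + 1)))
        atTop (nhds 0)) :=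
  stmt17_general a b ω hω0 hωnn hωsup f g C₁ C₂ θ₁ θ₂ hC₁ hC₂ hθ hf hg
end
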